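/- arXiv:1005.0160 — 4 statements merged into one kernel-verified Lean document; each statement's English description precedes it below -/
import Mathlib

section
/- (Monotonicity of the u-subdifferential.) Suppose u satisfies the Spence–Mirrlees condition and f : D_y → ℝ. Let y, ŷ ∈ D_y with y < ŷ, and suppose z ∈ ∂^u f(y) and ẑ ∈ ∂^u f(ŷ). Then ẑ ≥ z. -/
open Set

/-- The `u`-dual of a real-valued function `f` on `Dy`:
`f^u(z) = sup_{y ∈ Dy} (u(y,z) - f(y))`, valued in `EReal`. -/
noncomputable def uDual (Dy : Set ℝ) (u : ℝ → ℝ → ℝ) (f : ℝ → ℝ) (z : ℝ) : EReal :=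
  ⨆ y ∈ Dy, ((u y z : EReal) - (f y : EReal))

/-- The `u`-subdifferential of `f` at `y`:
`∂^u f(y) = { z ∈ Dz : f(y) + f^u(z) = u(y,z) }`. -/
def uSubdiff (Dy Dz : Set ℝ) (u : ℝ → ℝ → ℝ) (f : ℝ → ℝ) (y : ℝ) : Set ℝ :=
  {z | z ∈ Dz ∧ (f y : EReal) + uDual Dy u f z = (u y z : EReal)}

/-- The Spence–Mirrlees condition: `u` is C², `z ↦ u_y(y,z)` is strictly increasing on
`Dz` for each `y ∈ Dy`, and `y ↦ u_z(y,z)` is strictly increasing on `Dy` for each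
`z ∈ Dz`. -/
def SpenceMirrlees (Dy Dz : Set ℝ) (u : ℝ → ℝ → ℝ) : Prop :=
  ContDiff ℝ 2 (Function.uncurry u) ∧
  (∀ y ∈ Dy, StrictMonoOn (fun z => deriv (fun y' => u y' z) y) Dz) ∧
  (∀ z ∈ Dz, StrictMonoOn (fun y => deriv (fun z' => u y z') z) Dy)

/-! Adding the defining inequalities of `z ∈ ∂^u f(y)` and `ẑ ∈ ∂^u f(ŷ)` gives
`u(ŷ,z) - u(y,z) ≤ u(ŷ,ẑ) - u(y,ẑ)`. If `ẑ < z`, the Spence–Mirrlees condition makes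
`t ↦ u(t,z) - u(t,ẑ)` have positive derivative on `(y, ŷ) ⊆ D_y`, so it is strictly increasing
there, which reverses that inequality strictly. -/

theorem coe_sub_le_uDual {Dy : Set ℝ} {u : ℝ → ℝ → ℝ} {f : ℝ → ℝ} {y : ℝ} (hy : y ∈ Dy)
    (z : ℝ) : ((u y z - f y : ℝ) : EReal) ≤ uDual Dy u f z :=
  le_iSup₂_of_le (f := fun a (_ : a ∈ Dy) => ((u a z : EReal) - (f a : EReal))) y hy
    (EReal.coe_sub _ _).le

theorem sub_le_sub_of_mem_uSubdiff {Dy Dz : Set ℝ} {u : ℝ → ℝ → ℝ} {f : ℝ → ℝ} {y y' z : ℝ}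
    (hz : z ∈ uSubdiff Dy Dz u f y) (hy' : y' ∈ Dy) : u y' z - f y' ≤ u y z - f y := by
  have h : ((f y + (u y' z - f y') : ℝ) : EReal) ≤ u y z := by
    rw [← hz.2, EReal.coe_add]
    exact add_le_add_right (coe_sub_le_uDual hy' z) _
  have := EReal.coe_le_coe_iff.mp h
  linarith

theorem add_le_add_of_mem_uSubdiff {Dy Dz : Set ℝ} {u : ℝ → ℝ → ℝ} {f : ℝ → ℝ}
    {y yh z zh : ℝ} (hy : y ∈ Dy) (hyh : yh ∈ Dy)
    (hz : z ∈ uSubdiff Dy Dz u f y) (hzh : zh ∈ uSubdiff Dy Dz u f yh) :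
    u yh z + u y zh ≤ u y z + u yh zh := by
  have h₁ := sub_le_sub_of_mem_uSubdiff hz hyh
  have h₂ := sub_le_sub_of_mem_uSubdiff hzh hy
  linarith

theorem sub_lt_sub_of_strictMonoOn_deriv {Dy Dz : Set ℝ} (hDy : Dy.OrdConnected)
    {u : ℝ → ℝ → ℝ} (hdiff : ∀ z ∈ Dz, Differentiable ℝ fun y => u y z)
    (hmono : ∀ y ∈ Dy, StrictMonoOn (fun z => deriv (fun y' => u y' z) y) Dz)
    {y yh z zh : ℝ} (hy : y ∈ Dy) (hyh : yh ∈ Dy) (hylt : y < yh)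
    (hz : z ∈ Dz) (hzh : zh ∈ Dz) (hzlt : z < zh) :
    u yh z - u y z < u yh zh - u y zh := by
  let g : ℝ → ℝ := fun t => u t zh - u t z
  have hg : Differentiable ℝ g := (hdiff zh hzh).sub (hdiff z hz)
  have hg_mono : StrictMonoOn g (Icc y yh) := by
    refine strictMonoOn_of_deriv_pos (convex_Icc y yh) hg.continuous.continuousOn ?_
    intro t ht
    rw [interior_Icc] at ht
    have ht_mem : t ∈ Dy := hDy.out hy hyh (Ioo_subset_Icc_self ht)
    rw [deriv_fun_sub (hdiff zh hzh t) (hdiff z hz t), sub_pos]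
    exact hmono t ht_mem hz hzh hzlt
  have := hg_mono (left_mem_Icc.mpr hylt.le) (right_mem_Icc.mpr hylt.le) hylt
  simp only [g] at this
  linarith

theorem SpenceMirrlees.differentiable_left {Dy Dz : Set ℝ} {u : ℝ → ℝ → ℝ}
    (hSM : SpenceMirrlees Dy Dz u) (z : ℝ) : Differentiable ℝ fun y => u y z :=
  (hSM.1.differentiable (by norm_num)).comp (differentiable_id.prodMk (differentiable_const z))

theorem uSubdiff_monotone_general
    (Dy Dz : Set ℝ)
    (hDyI : Dy.OrdConnected)
    (u : ℝ → ℝ → ℝ) (hSM : SpenceMirrlees Dy Dz u) (f : ℝ → ℝ)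
    (y yh : ℝ) (hy : y ∈ Dy) (hyh : yh ∈ Dy) (hlt : y < yh)
    (z zh : ℝ) (hz : z ∈ uSubdiff Dy Dz u f y) (hzh : zh ∈ uSubdiff Dy Dz u f yh) :
    z ≤ zh := by
  by_contra! hzlt
  have h_cyclic := add_le_add_of_mem_uSubdiff hy hyh hz hzh
  have h_strict := sub_lt_sub_of_strictMonoOn_deriv hDyI
    (fun z _ => hSM.differentiable_left z) hSM.2.1 hy hyh hlt hzh.1 hz.1 hzlt
  linarith

/-- Monotonicity of the `u`-subdifferential: under the Spence–Mirrlees condition, if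
`y < yh`, `z ∈ ∂^u f(y)` and `zh ∈ ∂^u f(yh)`, then `zh ≥ z`. -/
theorem uSubdiff_monotone
    (Dy Dz : Set ℝ) (hDy : Dy.Nonempty) (hDz : Dz.Nonempty)
    (hDyI : Dy.OrdConnected) (hDzI : Dz.OrdConnected)
    (u : ℝ → ℝ → ℝ) (hSM : SpenceMirrlees Dy Dz u) (f : ℝ → ℝ)
    (y yh : ℝ) (hy : y ∈ Dy) (hyh : yh ∈ Dy) (hlt : y < yh)
    (z zh : ℝ) (hz : z ∈ uSubdiff Dy Dz u f y) (hzh : zh ∈ uSubdiff Dy Dz u f yh) :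
    z ≤ zh :=
  uSubdiff_monotone_general Dy Dz hDyI u hSM f y yh hy hyh hlt z zh hz hzh
end

section
/- Suppose u satisfies the Spence–Mirrlees condition. Let f : D_y → ℝ be differentiable almost everywhere and equal to the integral of its derivative (that is, f(y) = f(v) + ∫_v^y f'(w) dw for all v, y ∈ D_y). Suppose there is a nondecreasing map z* : D_y → D_z such that f'(y) = ∂u/∂y (y, z*(y)) at every point y of differentiability of f. Then f is u-convex, f is u-subdifferentiable at every y ∈ D_y with z*(y) ∈ ∂^u f(y), and f(y) = u(y, z*(y)) − f^u(z*(y)) for all y ∈ D_y. -/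
/-!
On an interval `[a, b] ⊆ D_y`, monotonicity of `z*` and of `z ↦ u_y(w, z)` sandwich
`f' = u_y(·, z*(·))` between `u_y(·, z*(a))` and `u_y(·, z*(b))`; integrating shows that for every
`v ∈ D_y` the function `y ↦ u(y, z*(v)) - f(y)` attains its maximum over `D_y` at `y = v`.
Hence `f^u(z*(v)) = u(v, z*(v)) - f(v)`, and `f` is the supremum of the functions
`u(·, z*(v)) + f(v) - u(v, z*(v))`, each of which lies below `f` and touches it at `v`.
-/

open Set MeasureTheory intervalIntegral

/-- `f : Dy → ℝ` is `u`-convex if there is a nonempty `S ⊆ Dz × ℝ` with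
`f(y) = sup_{(z,a) ∈ S} (u(y,z) + a)` for all `y ∈ Dy`. -/
def UConvex (Dy Dz : Set ℝ) (u : ℝ → ℝ → ℝ) (f : ℝ → ℝ) : Prop :=
  ∃ S : Set (ℝ × ℝ), S.Nonempty ∧ (∀ p ∈ S, p.1 ∈ Dz) ∧
    ∀ y ∈ Dy, (f y : EReal) = ⨆ p ∈ S, ((u y p.1 + p.2 : ℝ) : EReal)

theorem integral_sandwich_of_ae_le {φ ψ χ : ℝ → ℝ} {a b : ℝ} (hab : a ≤ b)
    (hφ : IntervalIntegrable φ volume a b) (hχ : IntervalIntegrable χ volume a b)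
    (hψ : AEStronglyMeasurable ψ volume)
    (h : ∀ᵐ w ∂volume.restrict (Icc a b), φ w ≤ ψ w ∧ ψ w ≤ χ w) :
    ∫ w in a..b, φ w ≤ ∫ w in a..b, ψ w ∧ ∫ w in a..b, ψ w ≤ ∫ w in a..b, χ w := by
  have hIoc := ae_restrict_of_ae_restrict_of_subset Ioc_subset_Icc_self h
  have hψint : IntervalIntegrable ψ volume a b :=
    (intervalIntegrable_iff_integrableOn_Ioc_of_le hab).2 <|
      integrable_of_le_of_le hψ.restrict (hIoc.mono fun _ hw => hw.1)
        (hIoc.mono fun _ hw => hw.2) hφ.1 hχ.1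
  exact ⟨integral_mono_ae_restrict hab hφ hψint (h.mono fun _ hw => hw.1),
    integral_mono_ae_restrict hab hψint hχ (h.mono fun _ hw => hw.2)⟩

section UDual

variable {Dy Dz : Set ℝ} {u : ℝ → ℝ → ℝ} {f : ℝ → ℝ} {y z : ℝ}

theorem uDual_eq_of_isMaxOn (hy : y ∈ Dy) (hmax : IsMaxOn (fun v => u v z - f v) Dy y) :
    uDual Dy u f z = ((u y z - f y : ℝ) : EReal) := by
  refine le_antisymm (iSup₂_le fun v hv => ?_) ?_
  · rw [← EReal.coe_sub]
    exact EReal.coe_le_coe_iff.2 (isMaxOn_iff.1 hmax v hv)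
  · rw [EReal.coe_sub]
    exact le_iSup₂ (f := fun v _ => (u v z : EReal) - (f v : EReal)) y hy

theorem mem_uSubdiff_of_isMaxOn (hz : z ∈ Dz) (hy : y ∈ Dy)
    (hmax : IsMaxOn (fun v => u v z - f v) Dy y) : z ∈ uSubdiff Dy Dz u f y :=
  ⟨hz, by rw [uDual_eq_of_isMaxOn hy hmax, ← EReal.coe_add, add_sub_cancel]⟩

theorem uConvex_of_isMaxOn {zs : ℝ → ℝ} (hDy : Dy.Nonempty) (hzs : ∀ y ∈ Dy, zs y ∈ Dz)
    (hmax : ∀ y ∈ Dy, IsMaxOn (fun v => u v (zs y) - f v) Dy y) : UConvex Dy Dz u f := by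
  refine ⟨(fun v => (zs v, f v - u v (zs v))) '' Dy, hDy.image _, ?_,
    fun y hy => le_antisymm ?_ (iSup₂_le ?_)⟩
  · rintro _ ⟨v, hv, rfl⟩
    exact hzs v hv
  · have h := le_iSup₂ (f := fun p (_ : p ∈ (fun v => (zs v, f v - u v (zs v))) '' Dy) =>
      ((u y p.1 + p.2 : ℝ) : EReal)) _ ⟨y, hy, rfl⟩
    simpa only [add_sub_cancel] using h
  · rintro _ ⟨v, hv, rfl⟩
    have h := isMaxOn_iff.1 (hmax v hv) y hy
    exact EReal.coe_le_coe_iff.2 (by dsimp only; linarith)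

end UDual

section SpenceMirrlees

variable {Dy Dz : Set ℝ} {u : ℝ → ℝ → ℝ} {f zs : ℝ → ℝ}

theorem ContDiff.uncurry_left {n : WithTop ℕ∞} (hu : ContDiff ℝ n (Function.uncurry u)) (z : ℝ) :
    ContDiff ℝ n (fun y => u y z) :=
  hu.comp (contDiff_prodMk_left z)

theorem integral_deriv_uncurry_left_eq_sub (hu : ContDiff ℝ 1 (Function.uncurry u))
    (z a b : ℝ) : ∫ w in a..b, deriv (fun y => u y z) w = u b z - u a z :=
  integral_deriv_eq_sub (fun _ _ => ((hu.uncurry_left z).differentiable one_ne_zero).differentiableAt)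
    (((hu.uncurry_left z).continuous_deriv le_rfl).intervalIntegrable a b)

theorem increment_bounds_of_ae_deriv_eq (hu : ContDiff ℝ 1 (Function.uncurry u))
    (hmono : ∀ y ∈ Dy, MonotoneOn (fun z => deriv (fun y' => u y' z) y) Dz)
    (hDy : Dy.OrdConnected) (hFTC : ∀ v ∈ Dy, ∀ y ∈ Dy, f y = f v + ∫ w in v..y, deriv f w)
    (hzs : ∀ y ∈ Dy, zs y ∈ Dz) (hzsmono : MonotoneOn zs Dy)
    (hderiv : ∀ᵐ w ∂volume.restrict Dy, deriv f w = deriv (fun y => u y (zs w)) w)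
    {a b : ℝ} (ha : a ∈ Dy) (hb : b ∈ Dy) (hab : a ≤ b) :
    u b (zs a) - u a (zs a) ≤ f b - f a ∧ f b - f a ≤ u b (zs b) - u a (zs b) := by
  have hsub : Icc a b ⊆ Dy := hDy.out ha hb
  have hbetween : ∀ᵐ w ∂volume.restrict (Icc a b),
      deriv (fun y => u y (zs a)) w ≤ deriv f w ∧ deriv f w ≤ deriv (fun y => u y (zs b)) w := by
    filter_upwards [ae_restrict_of_ae_restrict_of_subset hsub hderiv,
      ae_restrict_mem measurableSet_Icc] with w hw hmem
    have hw' : w ∈ Dy := hsub hmem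
    rw [hw]
    exact ⟨hmono w hw' (hzs a ha) (hzs w hw') (hzsmono ha hw' hmem.1),
      hmono w hw' (hzs w hw') (hzs b hb) (hzsmono hw' hb hmem.2)⟩
  have hint : ∀ z, IntervalIntegrable (deriv (fun y => u y z)) volume a b := fun z =>
    ((hu.uncurry_left z).continuous_deriv le_rfl).intervalIntegrable a b
  obtain ⟨hlo, hhi⟩ := integral_sandwich_of_ae_le hab (hint _) (hint _)
    (measurable_deriv f).aestronglyMeasurable hbetween
  rw [integral_deriv_uncurry_left_eq_sub hu] at hlo hhi
  have hf := hFTC a ha b hb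
  constructor <;> linarith

theorem isMaxOn_of_ae_deriv_eq (hu : ContDiff ℝ 1 (Function.uncurry u))
    (hmono : ∀ y ∈ Dy, MonotoneOn (fun z => deriv (fun y' => u y' z) y) Dz)
    (hDy : Dy.OrdConnected) (hFTC : ∀ v ∈ Dy, ∀ y ∈ Dy, f y = f v + ∫ w in v..y, deriv f w)
    (hzs : ∀ y ∈ Dy, zs y ∈ Dz) (hzsmono : MonotoneOn zs Dy)
    (hderiv : ∀ᵐ w ∂volume.restrict Dy, deriv f w = deriv (fun y => u y (zs w)) w)
    {y : ℝ} (hy : y ∈ Dy) : IsMaxOn (fun v => u v (zs y) - f v) Dy y := by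
  refine isMaxOn_iff.2 fun v hv => ?_
  rcases le_total y v with hyv | hvy
  · have h := (increment_bounds_of_ae_deriv_eq hu hmono hDy hFTC hzs hzsmono hderiv hy hv hyv).1
    linarith
  · have h := (increment_bounds_of_ae_deriv_eq hu hmono hDy hFTC hzs hzsmono hderiv hv hy hvy).2
    linarith

end SpenceMirrlees

theorem uConvex_of_deriv_eq_general
    (Dy Dz : Set ℝ) (hDy : Dy.Nonempty)
    (hDyI : Dy.OrdConnected)
    (u : ℝ → ℝ → ℝ) (hSM : SpenceMirrlees Dy Dz u) (f : ℝ → ℝ)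
    (hae : ∀ᵐ y ∂(volume.restrict Dy), DifferentiableAt ℝ f y)
    (hFTC : ∀ v ∈ Dy, ∀ y ∈ Dy, f y = f v + ∫ w in v..y, deriv f w)
    (zs : ℝ → ℝ) (hzsmem : ∀ y ∈ Dy, zs y ∈ Dz) (hzsmono : MonotoneOn zs Dy)
    (hderiv : ∀ y ∈ Dy, DifferentiableAt ℝ f y →
      deriv f y = deriv (fun y' => u y' (zs y)) y) :
    UConvex Dy Dz u f ∧
    (∀ y ∈ Dy, zs y ∈ uSubdiff Dy Dz u f y) ∧
    (∀ y ∈ Dy, (f y : EReal) = (u y (zs y) : EReal) - uDual Dy u f (zs y)) := by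
  obtain ⟨hC2, hmono, -⟩ := hSM
  have hderiv_ae : ∀ᵐ w ∂volume.restrict Dy, deriv f w = deriv (fun y => u y (zs w)) w := by
    filter_upwards [hae, ae_restrict_mem hDyI.measurableSet] with w hw hmem
    exact hderiv w hmem hw
  have hmax : ∀ y ∈ Dy, IsMaxOn (fun v => u v (zs y) - f v) Dy y := fun y hy =>
    isMaxOn_of_ae_deriv_eq (hC2.of_le one_le_two) (fun w hw => (hmono w hw).monotoneOn) hDyI
      hFTC hzsmem hzsmono hderiv_ae hy
  refine ⟨uConvex_of_isMaxOn hDy hzsmem hmax,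
    fun y hy => mem_uSubdiff_of_isMaxOn (hzsmem y hy) hy (hmax y hy), fun y hy => ?_⟩
  rw [uDual_eq_of_isMaxOn hy (hmax y hy), ← EReal.coe_sub, sub_sub_cancel]

/-- Under the Spence–Mirrlees condition, if `f` is a.e. differentiable, equal to the
integral of its derivative, and `f'(y) = u_y(y, z*(y))` at all points of
differentiability for a nondecreasing map `z* : Dy → Dz`, then `f` is `u`-convex,
`u`-subdifferentiable with `z*(y) ∈ ∂^u f(y)`, and `f(y) = u(y,z*(y)) - f^u(z*(y))`
for all `y ∈ Dy`. -/
theorem uConvex_of_deriv_eq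
    (Dy Dz : Set ℝ) (hDy : Dy.Nonempty) (hDz : Dz.Nonempty)
    (hDyI : Dy.OrdConnected) (hDzI : Dz.OrdConnected)
    (u : ℝ → ℝ → ℝ) (hSM : SpenceMirrlees Dy Dz u) (f : ℝ → ℝ)
    (hae : ∀ᵐ y ∂(volume.restrict Dy), DifferentiableAt ℝ f y)
    (hFTC : ∀ v ∈ Dy, ∀ y ∈ Dy, f y = f v + ∫ w in v..y, deriv f w)
    (zs : ℝ → ℝ) (hzsmem : ∀ y ∈ Dy, zs y ∈ Dz) (hzsmono : MonotoneOn zs Dy)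
    (hderiv : ∀ y ∈ Dy, DifferentiableAt ℝ f y →
      deriv f y = deriv (fun y' => u y' (zs y)) y) :
    UConvex Dy Dz u f ∧
    (∀ y ∈ Dy, zs y ∈ uSubdiff Dy Dz u f y) ∧
    (∀ y ∈ Dy, (f y : EReal) = (u y (zs y) : EReal) - uDual Dy u f (zs y)) :=
  uConvex_of_deriv_eq_general Dy Dz hDy hDyI u hSM f hae hFTC zs hzsmem hzsmono hderiv
end

section
/- Let Θ be a subinterval of ℝ, let g : [0,∞) × Θ → ℝ be such that ∂g/∂θ(x,t) exists and is nondecreasing in x for each t, and such that g(x,θ̂) − g(x,θ) = ∫_θ^{θ̂} ∂g/∂θ(x,t) dt for all x and all θ ≤ θ̂ in Θ. Let ψ : [0,∞) → ℝ ∪ {+∞} and set v(θ) = sup_{x ≥ 0} (g(x,θ) − ψ(x)). Suppose θ̂ ∈ Θ and x̂ ≥ 0 are such that v(θ̂) = g(x̂,θ̂) − ψ(x̂). Then for every θ ∈ Θ with θ < θ̂: (i) g(x̂,θ) − ψ(x̂) ≥ g(x,θ) − ψ(x) for all x > x̂, so that sup_{x ≥ 0}(g(x,θ) − ψ(x)) =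 sup_{0 ≤ x ≤ x̂}(g(x,θ) − ψ(x)); and (ii) if in addition x ↦ g(x,θ) − ψ(x) is upper semicontinuous on [0,x̂], then this supremum is attained, i.e. there exists x' ∈ [0,x̂] with v(θ) = g(x',θ) − ψ(x'). Consequently, the set of θ ∈ Θ at which the supremum defining v(θ) is attained is an interval containing all points of Θ below any point of attainment. -/
open Set

/-!
Because `∂g/∂θ` is nondecreasing in `x`, the function `g` has increasing differences: for
`xh ≤ x` and `θ ≤ θh`, `g xh θh - g xh θ ≤ g x θh - g x θ`. Lowering the parameter from `θh`
to `θ` therefore penalizes every level `x > xh` at least as much as `xh`, so a level beyond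
`xh` cannot beat `xh` at `θ` once it does not beat it at `θh`. The supremum at `θ` then lives
on the compact interval `[0, xh]`, where upper semicontinuity makes it attained.
-/

theorem monotoneOn_sub_of_hasDerivWithinAt_le {s : Set ℝ} (hs : Convex ℝ s)
    {f₁ f₂ f₁' f₂' : ℝ → ℝ} (hf₁ : ∀ t ∈ s, HasDerivWithinAt f₁ (f₁' t) s t)
    (hf₂ : ∀ t ∈ s, HasDerivWithinAt f₂ (f₂' t) s t) (hle : ∀ t ∈ s, f₁' t ≤ f₂' t) :
    MonotoneOn (fun t => f₂ t - f₁ t) s := by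
  refine monotoneOn_of_hasDerivWithinAt_nonneg hs (f' := fun t => f₂' t - f₁' t)
    (fun t ht => ((hf₂ t ht).sub (hf₁ t ht)).continuousWithinAt) (fun t ht => ?_)
    (fun t ht => sub_nonneg.2 (hle t (interior_subset ht)))
  exact ((hf₂ t (interior_subset ht)).sub (hf₁ t (interior_subset ht))).mono interior_subset

theorem EReal.coe_sub_add_coe (c r : ℝ) (q : EReal) : ((c : EReal) - q) + r = ↑(c + r) - q := by
  rw [sub_eq_add_neg, sub_eq_add_neg, add_right_comm, EReal.coe_add]

theorem EReal.coe_sub_le_coe_sub_of_sub_le {a b c d : ℝ} {p q : EReal}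
    (h : (c : EReal) - q ≤ a - p) (hd : d - c ≤ b - a) : (d : EReal) - q ≤ b - p :=
  calc (d : EReal) - q = ((c : EReal) - q) + ↑(d - c) := by
        rw [EReal.coe_sub_add_coe, add_sub_cancel]
    _ ≤ ((a : EReal) - p) + ↑(b - a) := add_le_add h (EReal.coe_le_coe_iff.2 hd)
    _ = (b : EReal) - p := by rw [EReal.coe_sub_add_coe, add_sub_cancel]

theorem biSup_Ici_eq_biSup_Icc_of_le {α β : Type*} [LinearOrder α] [CompleteLattice β]
    {f : α → β} {a b : α} (hab : a ≤ b) (h : ∀ x, b < x → f x ≤ f b) :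
    ⨆ x ∈ Ici a, f x = ⨆ x ∈ Icc a b, f x := by
  refine le_antisymm (iSup₂_le fun x hx => ?_) (biSup_mono fun x hx => hx.1)
  rcases le_or_gt x b with hxb | hbx
  · exact le_iSup₂_of_le x ⟨hx, hxb⟩ le_rfl
  · exact le_iSup₂_of_le b ⟨hab, le_rfl⟩ (h x hbx)

section IncreasingDifferences

variable {Θ : Set ℝ} {g gθ : ℝ → ℝ → ℝ}

theorem sub_le_sub_of_hasDerivWithinAt_monotone (hΘ : Convex ℝ Θ)
    (hderiv : ∀ x ∈ Ici (0:ℝ), ∀ t ∈ Θ, HasDerivWithinAt (fun t' => g x t') (gθ x t) Θ t)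
    (hmono : ∀ t ∈ Θ, MonotoneOn (fun x => gθ x t) (Ici 0))
    {x₁ x₂ : ℝ} (hx₁ : 0 ≤ x₁) (hx : x₁ ≤ x₂) {θ₁ θ₂ : ℝ} (hθ₁ : θ₁ ∈ Θ) (hθ₂ : θ₂ ∈ Θ)
    (hθ : θ₁ ≤ θ₂) : g x₁ θ₂ - g x₁ θ₁ ≤ g x₂ θ₂ - g x₂ θ₁ := by
  have hx₂ : x₂ ∈ Ici (0:ℝ) := hx₁.trans hx
  have := monotoneOn_sub_of_hasDerivWithinAt_le hΘ (hderiv x₁ hx₁) (hderiv x₂ hx₂)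
    (fun t ht => hmono t ht hx₁ hx₂ hx) hθ₁ hθ₂ hθ
  dsimp only at this
  linarith

theorem coe_sub_le_of_isMaxOn_of_le (hΘ : Convex ℝ Θ)
    (hderiv : ∀ x ∈ Ici (0:ℝ), ∀ t ∈ Θ, HasDerivWithinAt (fun t' => g x t') (gθ x t) Θ t)
    (hmono : ∀ t ∈ Θ, MonotoneOn (fun x => gθ x t) (Ici 0)) {ψ : ℝ → EReal}
    {θ θh xh : ℝ} (hθ : θ ∈ Θ) (hθh : θh ∈ Θ) (hθθh : θ ≤ θh)
    (hxh : 0 ≤ xh) (hmax : IsMaxOn (fun x => (g x θh : EReal) - ψ x) (Ici 0) xh)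
    {x : ℝ} (hx : xh ≤ x) : (g x θ : EReal) - ψ x ≤ (g xh θ : EReal) - ψ xh := by
  refine EReal.coe_sub_le_coe_sub_of_sub_le (hmax (mem_Ici.2 (hxh.trans hx))) ?_
  have := sub_le_sub_of_hasDerivWithinAt_monotone hΘ hderiv hmono hxh hx hθ hθh hθθh
  linarith

end IncreasingDifferences

theorem attainment_set_is_interval_general
    (Θ : Set ℝ) (hΘI : Θ.OrdConnected)
    (g gθ : ℝ → ℝ → ℝ)
    (hderiv : ∀ x ∈ Ici (0:ℝ), ∀ t ∈ Θ, HasDerivWithinAt (fun t' => g x t') (gθ x t) Θ t)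
    (hmono : ∀ t ∈ Θ, MonotoneOn (fun x => gθ x t) (Ici 0))
    (ψ : ℝ → EReal) (v : ℝ → EReal)
    (hv : ∀ θ ∈ Θ, v θ = ⨆ x ∈ Ici (0:ℝ), ((g x θ : EReal) - ψ x))
    (θh : ℝ) (hθh : θh ∈ Θ) (xh : ℝ) (hxh : 0 ≤ xh)
    (hatt : v θh = (g xh θh : EReal) - ψ xh) :
    ∀ θ ∈ Θ, θ < θh →
      ((∀ x : ℝ, xh < x → (g x θ : EReal) - ψ x ≤ (g xh θ : EReal) - ψ xh) ∧
       (⨆ x ∈ Ici (0:ℝ), ((g x θ : EReal) - ψ x))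
          = ⨆ x ∈ Icc (0:ℝ) xh, ((g x θ : EReal) - ψ x) ∧
       (UpperSemicontinuousOn (fun x => (g x θ : EReal) - ψ x) (Icc 0 xh) →
         ∃ x' ∈ Icc (0:ℝ) xh, v θ = (g x' θ : EReal) - ψ x')) := by
  intro θ hθ hθθh
  have hmax : IsMaxOn (fun x => (g x θh : EReal) - ψ x) (Ici 0) xh := isMaxOn_iff.2 fun x hx => by
    rw [← hatt, hv θh hθh]
    exact le_iSup₂ (f := fun x _ => (g x θh : EReal) - ψ x) x hx
  have hbeyond : ∀ x : ℝ, xh < x → (g x θ : EReal) - ψ x ≤ (g xh θ : EReal) - ψ xh :=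
    fun x hx => coe_sub_le_of_isMaxOn_of_le hΘI.convex hderiv hmono hθ hθh hθθh.le hxh hmax hx.le
  have hsup := biSup_Ici_eq_biSup_Icc_of_le hxh hbeyond
  refine ⟨hbeyond, hsup, fun husc => ?_⟩
  obtain ⟨x', hx', hmax'⟩ := husc.exists_isMaxOn (nonempty_Icc.2 hxh) isCompact_Icc
  refine ⟨x', hx', ?_⟩
  rw [hv θ hθ, hsup]
  exact le_antisymm (iSup₂_le hmax') (le_iSup₂_of_le x' hx' le_rfl)

/-- Suppose `∂g/∂θ(x,·)` exists (within `Θ`), is nondecreasing in `x ≥ 0` for each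
`t ∈ Θ`, and `g(x,θ') - g(x,θ) = ∫_θ^θ' ∂g/∂θ(x,t) dt`. Let
`v(θ) = sup_{x ≥ 0}(g(x,θ) - ψ(x))`, and suppose the supremum for `θh ∈ Θ` is attained
at `xh ≥ 0`.  Then for every `θ ∈ Θ` with `θ < θh`:
(i) `g(xh,θ) - ψ(xh) ≥ g(x,θ) - ψ(x)` for all `x > xh`, so the supremum over `x ≥ 0`
equals the supremum over `[0,xh]`; and (ii) if `x ↦ g(x,θ) - ψ(x)` is upper
semicontinuous on `[0,xh]`, the supremum is attained at some `x' ∈ [0,xh]`. -/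
theorem attainment_set_is_interval
    (Θ : Set ℝ) (hΘ : Θ.Nonempty) (hΘI : Θ.OrdConnected)
    (g gθ : ℝ → ℝ → ℝ)
    (hderiv : ∀ x ∈ Ici (0:ℝ), ∀ t ∈ Θ, HasDerivWithinAt (fun t' => g x t') (gθ x t) Θ t)
    (hmono : ∀ t ∈ Θ, MonotoneOn (fun x => gθ x t) (Ici 0))
    (hint : ∀ x ∈ Ici (0:ℝ), ∀ θ ∈ Θ, ∀ θ' ∈ Θ, θ ≤ θ' →
      g x θ' - g x θ = ∫ t in θ..θ', gθ x t)
    (ψ : ℝ → EReal) (v : ℝ → EReal)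
    (hv : ∀ θ ∈ Θ, v θ = ⨆ x ∈ Ici (0:ℝ), ((g x θ : EReal) - ψ x))
    (θh : ℝ) (hθh : θh ∈ Θ) (xh : ℝ) (hxh : 0 ≤ xh)
    (hatt : v θh = (g xh θh : EReal) - ψ xh) :
    ∀ θ ∈ Θ, θ < θh →
      ((∀ x : ℝ, xh < x → (g x θ : EReal) - ψ x ≤ (g xh θ : EReal) - ψ xh) ∧
       (⨆ x ∈ Ici (0:ℝ), ((g x θ : EReal) - ψ x))
          = ⨆ x ∈ Icc (0:ℝ) xh, ((g x θ : EReal) - ψ x) ∧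
       (UpperSemicontinuousOn (fun x => (g x θ : EReal) - ψ x) (Icc 0 xh) →
         ∃ x' ∈ Icc (0:ℝ) xh, v θ = (g x' θ : EReal) - ψ x')) :=
  attainment_set_is_interval_general Θ hΘI g gθ hderiv hmono ψ v hv θh hθh xh hxh hatt
end

section
/- Let Θ be a subinterval of ℝ, let g : [0,∞) × Θ → ℝ, and let w : [0,∞) → ℝ. Define v(θ) = sup_{x ≥ 0}(g(x,θ) − w(x)), assumed finite, and suppose that for every θ ∈ Θ the supremum is achieved only in the limit, namely v(θ) = limsup_{x→∞}(g(x,θ) − w(x)). Let f : [0,∞) → ℝ satisfy f(x) ≥ w(x) for all x ≥ 0 and lim_{x→∞}(f(x) − w(x)) = 0. Then f^g(θ) := sup_{x ≥ 0}(g(x,θ) − f(x)) = v(θ) for every θ ∈ Θ. -/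
open Set Filter

/-- Suppose `v(θ) = sup_{x ≥ 0}(g(x,θ) - w(x))` is finite and, for every `θ ∈ Θ`, is
achieved only in the limit: `v(θ) = limsup_{x→∞}(g(x,θ) - w(x))`.  If `f ≥ w` on
`[0,∞)` and `f(x) - w(x) → 0` as `x → ∞`, then the `g`-convex dual of `f` equals `v`
on `Θ`: `sup_{x ≥ 0}(g(x,θ) - f(x)) = v(θ)`. -/
theorem dual_eq_of_dominating_with_vanishing_gap
    (Θ : Set ℝ) (hΘ : Θ.Nonempty) (hΘI : Θ.OrdConnected)
    (g : ℝ → ℝ → ℝ) (w : ℝ → ℝ) (v : ℝ → ℝ)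
    (hv : ∀ θ ∈ Θ, (v θ : EReal) = ⨆ x ∈ Ici (0:ℝ), ((g x θ - w x : ℝ) : EReal))
    (hlimsup : ∀ θ ∈ Θ,
      (v θ : EReal) = Filter.limsup (fun x => ((g x θ - w x : ℝ) : EReal)) Filter.atTop)
    (f : ℝ → ℝ) (hfw : ∀ x : ℝ, 0 ≤ x → w x ≤ f x)
    (hgap : Filter.Tendsto (fun x => f x - w x) Filter.atTop (nhds 0)) :
    ∀ θ ∈ Θ, (⨆ x ∈ Ici (0:ℝ), ((g x θ - f x : ℝ) : EReal)) = (v θ : EReal) := by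
  intro θ hθ
  apply le_antisymm
  · rw [hv θ hθ]
    refine iSup₂_mono fun x hx => ?_
    exact EReal.coe_le_coe_iff.mpr (by linarith [hfw x hx])
  · -- lower bound: v ≤ sup
    set S : EReal := ⨆ x ∈ Ici (0:ℝ), ((g x θ - f x : ℝ) : EReal) with hS
    have key : ∀ ε : ℝ, 0 < ε → ((v θ - ε : ℝ) : EReal) ≤ S := by
      intro ε hε
      -- frequently g x θ - w x > v θ - ε/2
      have h1 : ∃ᶠ x in atTop, ((v θ - ε/2 : ℝ) : EReal) < ((g x θ - w x : ℝ) : EReal) := by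
        apply Filter.frequently_lt_of_lt_limsup
        · exact Filter.isCoboundedUnder_le_of_le (f := fun x : ℝ => ((g x θ - w x : ℝ) : EReal)) atTop (x := ⊥) (fun x => bot_le)
        · rw [← hlimsup θ hθ]
          exact_mod_cast by linarith
      have h2 : ∀ᶠ x in atTop, f x - w x ≤ ε/2 := by
        have := (hgap.eventually (eventually_le_nhds (by linarith : (0:ℝ) < ε/2)))
        exact this
      have h3 : ∀ᶠ (x : ℝ) in atTop, (0:ℝ) ≤ x := eventually_ge_atTop 0
      obtain ⟨x, hx1, hx2, hx3⟩ := (h1.and_eventually (h2.and h3)).exists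
      have hx1' : v θ - ε/2 < g x θ - w x := by exact_mod_cast hx1
      have : ((v θ - ε : ℝ) : EReal) ≤ ((g x θ - f x : ℝ) : EReal) := by
        exact_mod_cast by linarith
      exact this.trans (le_iSup₂ (f := fun x (_ : x ∈ Ici (0:ℝ)) => ((g x θ - f x : ℝ) : EReal)) x hx3)
    -- conclude
    by_contra h
    push_neg at h
    have hSbot : S ≠ ⊥ := by
      intro hb
      have := key 1 one_pos
      rw [hb] at this
      exact (EReal.coe_ne_bot _) (le_bot_iff.mp this)
    have hStop : S ≠ ⊤ := fun ht => by rw [ht] at h; exact (not_top_lt h)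
    lift S to ℝ using ⟨hStop, hSbot⟩ with s
    have hsv : s < v θ := by exact_mod_cast h
    have := key ((v θ - s)/2) (by linarith)
    have : v θ - (v θ - s)/2 ≤ s := by exact_mod_cast this
    linarith
end
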